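/- arXiv:1908.03473 — 3 statements merged into one kernel-verified Lean document; each statement's English description precedes it below -/
import Mathlib

section
/- Let G be a connected weighted undirected graph with distinct edge weights, T its minimum spanning tree, and e an edge of T that is not a bridge of G. Then the minimum-weight non-tree edge f whose fundamental cycle (with respect to T) contains e is such that T - e + f is a minimum spanning tree of G - e. -/
open SimpleGraph

/-- `T` is a spanning tree of `G`: a subgraph that is a tree on all vertices. -/
def IsSpanningTree {V : Type*} (G T : SimpleGraph V) : Prop := T ≤ G ∧ T.IsTree

/-- Total weight of the edges of a graph. -/
noncomputable def gweight {V : Type*} [Fintype V] [DecidableEq V]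
    (T : SimpleGraph V) (w : Sym2 V → ℝ) : ℝ :=
  ∑ e ∈ T.edgeSet.toFinite.toFinset, w e

/-- `T` is a minimum spanning tree of `G` with respect to the weights `w`. -/
def IsMST {V : Type*} [Fintype V] [DecidableEq V]
    (G T : SimpleGraph V) (w : Sym2 V → ℝ) : Prop :=
  IsSpanningTree G T ∧
    ∀ T' : SimpleGraph V, IsSpanningTree G T' → gweight T w ≤ gweight T' w

/-- `e` lies on the fundamental cycle (w.r.t. tree `T`) of the non-tree edge `f`:
it is `f` itself or an edge of the tree path joining the endpoints of `f`. -/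
def InFundCycle {V : Type*} (T : SimpleGraph V) (f e : Sym2 V) : Prop :=
  e = f ∨ ∃ (u v : V) (p : T.Walk u v), p.IsPath ∧ f = s(u, v) ∧ e ∈ p.edges

namespace MSTAux

variable {V : Type*}

/-- After deleting the edge `e = s(a,b)`, any vertex having a walk to `a` is still
reachable to `a` or to `b`. -/
lemma reach_of_del_aux {G : SimpleGraph V} {a b x y : V} (p : G.Walk x y)
    (hy : (G.deleteEdges {s(a, b)}).Reachable y a ∨ (G.deleteEdges {s(a, b)}).Reachable y b) :
    (G.deleteEdges {s(a, b)}).Reachable x a ∨ (G.deleteEdges {s(a, b)}).Reachable x b := by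
  induction p with
  | nil => exact hy
  | @cons u u' _ h q ih =>
    by_cases hd : s(u, u') = s(a, b)
    · rw [Sym2.eq_iff] at hd
      rcases hd with ⟨rfl, rfl⟩ | ⟨rfl, rfl⟩
      · exact Or.inl (Reachable.refl _)
      · exact Or.inr (Reachable.refl _)
    · have hadj : (G.deleteEdges {s(a, b)}).Adj u u' := by
        rw [SimpleGraph.deleteEdges_adj]
        exact ⟨h, by simpa using hd⟩
      rcases ih hy with h1 | h1
      · exact Or.inl (hadj.reachable.trans h1)
      · exact Or.inr (hadj.reachable.trans h1)

/-- After deleting the edge `s(a,b)`, any vertex having a walk to `a` is still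
reachable to `a` or to `b`. -/
lemma reach_of_del {G : SimpleGraph V} {e : Sym2 V} {a b x : V} (he : e = s(a, b))
    (p : G.Walk x a) :
    (G.deleteEdges {e}).Reachable x a ∨ (G.deleteEdges {e}).Reachable x b := by
  subst he
  exact reach_of_del_aux p (Or.inl (Reachable.refl _))

/-- In a tree, if the (unique) path from `x` to `y` uses the edge `e`, then after
deleting `e` the vertices `x` and `y` are no longer reachable from each other. -/
lemma not_reach_of_path_mem [DecidableEq V] {T : SimpleGraph V} (hT : T.IsTree) {e : Sym2 V}
    {x y : V} (p : T.Walk x y) (hp : p.IsPath) (hep : e ∈ p.edges) :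
    ¬ (T.deleteEdges {e}).Reachable x y := by
  rintro ⟨q⟩
  have hsub : ∀ e' ∈ q.edges, e' ∈ T.edgeSet := by
    intro e' h
    have := q.edges_subset_edgeSet h
    rw [SimpleGraph.edgeSet_deleteEdges] at this
    exact this.1
  have hnot : ∀ e' ∈ q.edges, e' ≠ e := by
    intro e' h
    have := q.edges_subset_edgeSet h
    rw [SimpleGraph.edgeSet_deleteEdges] at this
    simpa using this.2
  have hpq : (⟨p, hp⟩ : T.Path x y) = (q.transfer T hsub).toPath :=
    hT.IsAcyclic.path_unique _ _
  have hep' : e ∈ ((q.transfer T hsub).toPath : T.Walk x y).edges := by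
    have : p = ((q.transfer T hsub).toPath : T.Walk x y) := congrArg Subtype.val hpq
    rwa [this] at hep
  have : e ∈ (q.transfer T hsub).edges := SimpleGraph.Walk.edges_toPath_subset _ hep'
  rw [SimpleGraph.Walk.edges_transfer] at this
  exact hnot e this rfl

/-- In a tree, if `x` and `y` are not reachable after deleting `e`, then there is a
path from `x` to `y` through `e`. -/
lemma exists_path_mem_of_not_reach [DecidableEq V] {T : SimpleGraph V} (hT : T.IsTree) {e : Sym2 V}
    {x y : V} (h : ¬ (T.deleteEdges {e}).Reachable x y) :
    ∃ p : T.Walk x y, p.IsPath ∧ e ∈ p.edges := by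
  obtain ⟨q⟩ := hT.isConnected x y
  refine ⟨q.toPath, (q.toPath).2, ?_⟩
  by_contra hne
  refine h ⟨(q.toPath : T.Walk x y).transfer (T.deleteEdges {e}) ?_⟩
  intro e' h'
  rw [SimpleGraph.edgeSet_deleteEdges]
  refine ⟨SimpleGraph.Walk.edges_subset_edgeSet _ h', ?_⟩
  intro hh
  rw [Set.mem_singleton_iff] at hh
  exact hne (hh ▸ h')

/-- Along a walk from a vertex satisfying `P` to one violating `P`, there is an edge
crossing from `P` to `¬ P`. -/
lemma exists_cross_edge {H : SimpleGraph V} (P : V → Prop) :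
    ∀ {u v : V} (p : H.Walk u v), P u → ¬ P v →
      ∃ c d, s(c, d) ∈ p.edges ∧ H.Adj c d ∧ P c ∧ ¬ P d := by
  intro u v p
  induction p with
  | nil => intro h h'; exact absurd h h'
  | @cons u u' v h q ih =>
    intro hu hv
    by_cases h' : P u'
    · obtain ⟨c, d, hm, rest⟩ := ih h' hv
      exact ⟨c, d, by rw [SimpleGraph.Walk.edges_cons]; exact List.mem_cons_of_mem _ hm, rest⟩
    · exact ⟨u, u', by rw [SimpleGraph.Walk.edges_cons]; exact List.mem_cons_self, h, hu, h'⟩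

/-- The key exchange lemma: removing an edge `s(c,d)` from a tree and adding a new edge
`s(a,b)` whose ends are separated by the removal yields a tree again. -/
lemma swap_isTree [DecidableEq V] {S : SimpleGraph V} (hS : S.IsTree) {c d : V} (hcd : S.Adj c d)
    {a b : V} (hab : a ≠ b) (hnr : ¬ (S.deleteEdges {s(c, d)}).Reachable a b) :
    (S.deleteEdges {s(c, d)} ⊔ SimpleGraph.fromEdgeSet {s(a, b)}).IsTree := by
  classical
  set D := S.deleteEdges {s(c, d)} ⊔ SimpleGraph.fromEdgeSet {s(a, b)} with hD
  have hle : S.deleteEdges {s(c, d)} ≤ D := le_sup_left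
  have hADJ : D.Adj a b := by
    rw [hD, SimpleGraph.sup_adj, SimpleGraph.fromEdgeSet_adj]
    exact Or.inr ⟨rfl, hab⟩
  have hrc : ∀ x, (S.deleteEdges {s(c, d)}).Reachable x c ∨
      (S.deleteEdges {s(c, d)}).Reachable x d := by
    intro x
    obtain ⟨p⟩ := hS.isConnected x c
    exact reach_of_del rfl p
  have hcdD : D.Reachable c d := by
    rcases hrc a with ha | ha <;> rcases hrc b with hb | hb
    · exact absurd (ha.trans hb.symm) hnr
    · exact ((ha.mono hle).symm.trans hADJ.reachable).trans (hb.mono hle)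
    · exact ((hb.mono hle).symm.trans hADJ.symm.reachable).trans (ha.mono hle)
    · exact absurd (ha.trans hb.symm) hnr
  have hreachc : ∀ x, D.Reachable x c := by
    intro x
    rcases hrc x with h | h
    · exact h.mono hle
    · exact (h.mono hle).trans hcdD.symm
  have hconn : D.Connected := by
    rw [SimpleGraph.connected_iff]
    exact ⟨fun u v => (hreachc u).trans (hreachc v).symm, ⟨a⟩⟩
  have hac : D.IsAcyclic := by
    intro u cyc hcyc
    by_cases hm : s(a, b) ∈ cyc.edges
    · have hre : (D \ SimpleGraph.fromEdgeSet {s(a, b)}).Reachable a b :=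
        (SimpleGraph.adj_and_reachable_delete_edges_iff_exists_cycle.mpr
          ⟨u, cyc, hcyc, hm⟩).2
      apply hnr
      refine hre.mono ?_
      intro x y hxy
      rw [SimpleGraph.sdiff_adj, hD, SimpleGraph.sup_adj] at hxy
      tauto
    · have hsub : ∀ z ∈ cyc.edges, z ∈ (S.deleteEdges {s(c, d)}).edgeSet := by
        intro z hz
        have hz' := cyc.edges_subset_edgeSet hz
        rw [hD, SimpleGraph.edgeSet_sup] at hz'
        rcases hz' with h | h
        · exact h
        · rw [SimpleGraph.edgeSet_fromEdgeSet] at h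
          rw [Set.mem_diff, Set.mem_singleton_iff] at h
          exact absurd (h.1 ▸ hz) hm
      exact hS.IsAcyclic _
        ((hcyc.transfer hsub).mapLe (SimpleGraph.deleteEdges_le _))
  exact ⟨hconn, hac⟩

/-- Weight bookkeeping for an edge swap. -/
lemma gweight_swap [Fintype V] [DecidableEq V] (S : SimpleGraph V) (w : Sym2 V → ℝ)
    {g e' : Sym2 V} (hg : g ∈ S.edgeSet) (he' : e' ∉ S.edgeSet) (hd : ¬ e'.IsDiag) :
    gweight (S.deleteEdges {g} ⊔ SimpleGraph.fromEdgeSet {e'}) w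
      = gweight S w - w g + w e' := by
  classical
  have hset : (S.deleteEdges {g} ⊔ SimpleGraph.fromEdgeSet {e'}).edgeSet.toFinite.toFinset
      = insert e' (S.edgeSet.toFinite.toFinset.erase g) := by
    ext z
    simp only [Set.Finite.mem_toFinset, SimpleGraph.edgeSet_sup,
      SimpleGraph.edgeSet_deleteEdges, SimpleGraph.edgeSet_fromEdgeSet,
      Set.mem_union, Set.mem_diff, Set.mem_singleton_iff, Finset.mem_insert,
      Finset.mem_erase, Set.mem_setOf_eq]
    constructor
    · rintro (⟨h1, h2⟩ | ⟨h1, _⟩)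
      · exact Or.inr ⟨h2, h1⟩
      · exact Or.inl h1
    · rintro (rfl | ⟨h1, h2⟩)
      · exact Or.inr ⟨rfl, hd⟩
      · exact Or.inl ⟨h2, h1⟩
  have hnotmem : e' ∉ S.edgeSet.toFinite.toFinset.erase g := by
    intro h
    exact he' (by simpa using (Finset.mem_of_mem_erase h))
  have hgmem : g ∈ S.edgeSet.toFinite.toFinset := by simpa using hg
  unfold gweight
  rw [hset, Finset.sum_insert hnotmem]
  have herase := Finset.add_sum_erase _ w hgmem
  linarith

end MSTAux

open MSTAux in
/-- the minimum-weight non-tree edge `f` whose fundamental cycle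
contains the non-bridge tree edge `e` is such that `T - e + f` is an MST of `G - e`. -/
theorem stmt0 {V : Type*} [Fintype V] [DecidableEq V]
    (G T : SimpleGraph V) (w : Sym2 V → ℝ)
    (hG : G.Connected) (hw : Set.InjOn w G.edgeSet)
    (hT : IsMST G T w)
    (e : Sym2 V) (he : e ∈ T.edgeSet) (hbr : ¬ G.IsBridge e)
    (f : Sym2 V) (hf : f ∈ G.edgeSet \ T.edgeSet)
    (hcyc : InFundCycle T f e)
    (hmin : ∀ f' ∈ G.edgeSet \ T.edgeSet, InFundCycle T f' e → w f ≤ w f') :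
    IsMST (G.deleteEdges {e}) (T.deleteEdges {e} ⊔ SimpleGraph.fromEdgeSet {f}) w := by
  classical
  obtain ⟨⟨hTle, hTt⟩, hTmin⟩ := hT
  induction e using Sym2.ind with
  | _ a b =>
  -- unpack the fundamental-cycle hypothesis
  have hef : s(a, b) ≠ f := fun h => hf.2 (h ▸ he)
  obtain ⟨u, v, p, hp, hfeq, hep⟩ := hcyc.resolve_left hef
  subst hfeq
  have hab : T.Adj a b := (SimpleGraph.mem_edgeSet _).mp he
  have habne : a ≠ b := hab.ne
  have hGuv : G.Adj u v := (SimpleGraph.mem_edgeSet _).mp hf.1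
  have huvne : u ≠ v := hGuv.ne
  -- the new edge crosses the cut created by removing e
  have hnuv : ¬ (T.deleteEdges {s(a, b)}).Reachable u v :=
    not_reach_of_path_mem hTt p hp hep
  -- T' is a tree
  have tree1 : (T.deleteEdges {s(a, b)} ⊔ SimpleGraph.fromEdgeSet {s(u, v)}).IsTree :=
    swap_isTree hTt hab huvne hnuv
  -- T' is a subgraph of G - e
  have le1 : T.deleteEdges {s(a, b)} ⊔ SimpleGraph.fromEdgeSet {s(u, v)}
      ≤ G.deleteEdges {s(a, b)} := by
    refine sup_le ?_ ?_
    · intro x y hxy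
      rw [SimpleGraph.deleteEdges_adj] at hxy ⊢
      exact ⟨hTle hxy.1, hxy.2⟩
    · intro x y hxy
      rw [SimpleGraph.fromEdgeSet_adj, Set.mem_singleton_iff] at hxy
      rw [SimpleGraph.deleteEdges_adj]
      constructor
      · exact (SimpleGraph.mem_edgeSet _).mp (hxy.1 ▸ hf.1)
      · rw [Set.mem_singleton_iff, hxy.1]
        exact fun h => hef h.symm
  -- weight of T'
  have weight1 : gweight (T.deleteEdges {s(a, b)} ⊔ SimpleGraph.fromEdgeSet {s(u, v)}) w
      = gweight T w - w s(a, b) + w s(u, v) :=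
    gweight_swap T w he hf.2 (by rw [Sym2.mk_isDiag_iff]; exact huvne)
  refine ⟨⟨le1, tree1⟩, ?_⟩
  -- minimality
  intro S hS
  obtain ⟨hSle, hStree⟩ := hS
  -- the path in S from a to b
  obtain ⟨q0⟩ := hStree.isConnected a b
  set q : S.Walk a b := (q0.toPath : S.Walk a b) with hq
  have hqpath : q.IsPath := q0.toPath.2
  -- a and b are separated in T - e
  have hnab : ¬ (T.deleteEdges {s(a, b)}).Reachable a b := by
    refine not_reach_of_path_mem hTt (SimpleGraph.Walk.cons hab SimpleGraph.Walk.nil)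
      ?_ (by simp)
    simp [habne]
  -- find a crossing edge s(c,d) on q
  obtain ⟨c, d, hm, hadjS, hPc, hPd⟩ :=
    exists_cross_edge (fun x => (T.deleteEdges {s(a, b)}).Reachable a x) q
      (Reachable.refl _) hnab
  have hncd : ¬ (T.deleteEdges {s(a, b)}).Reachable c d := fun h => hPd (hPc.trans h)
  -- s(c,d) is a non-tree edge of G
  have hgG : G.Adj c d ∧ s(c, d) ∉ ({s(a, b)} : Set (Sym2 V)) := by
    have := hSle hadjS
    rw [SimpleGraph.deleteEdges_adj] at this
    exact this
  have hgT : s(c, d) ∉ T.edgeSet := by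
    intro h
    have hadjT : (T.deleteEdges {s(a, b)}).Adj c d := by
      rw [SimpleGraph.deleteEdges_adj]
      exact ⟨(SimpleGraph.mem_edgeSet _).mp h, hgG.2⟩
    exact hncd hadjT.reachable
  -- its fundamental cycle contains e, hence w f ≤ w s(c,d)
  have hfund : InFundCycle T s(c, d) s(a, b) := by
    obtain ⟨q2, hq2, he2⟩ := exists_path_mem_of_not_reach hTt hncd
    exact Or.inr ⟨c, d, q2, hq2, rfl, he2⟩
  have hwf : w s(u, v) ≤ w s(c, d) :=
    hmin _ ⟨(SimpleGraph.mem_edgeSet _).mpr hgG.1, hgT⟩ hfund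
  -- removing s(c,d) from S separates a and b
  have hnrS : ¬ (S.deleteEdges {s(c, d)}).Reachable a b :=
    not_reach_of_path_mem hStree q hqpath hm
  -- swap in S: S - s(c,d) + s(a,b) is a spanning tree of G
  have tree2 : (S.deleteEdges {s(c, d)} ⊔ SimpleGraph.fromEdgeSet {s(a, b)}).IsTree :=
    swap_isTree hStree hadjS habne hnrS
  have le2 : S.deleteEdges {s(c, d)} ⊔ SimpleGraph.fromEdgeSet {s(a, b)} ≤ G := by
    refine sup_le ((SimpleGraph.deleteEdges_le _).trans
      (hSle.trans (SimpleGraph.deleteEdges_le _))) ?_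
    intro x y hxy
    rw [SimpleGraph.fromEdgeSet_adj, Set.mem_singleton_iff] at hxy
    exact (SimpleGraph.mem_edgeSet _).mp (hxy.1 ▸ (hTle hab))
  have heS : s(a, b) ∉ S.edgeSet := by
    intro h
    have := hSle ((SimpleGraph.mem_edgeSet _).mp h)
    rw [SimpleGraph.deleteEdges_adj] at this
    exact this.2 rfl
  have weight2 : gweight (S.deleteEdges {s(c, d)} ⊔ SimpleGraph.fromEdgeSet {s(a, b)}) w
      = gweight S w - w s(c, d) + w s(a, b) :=
    gweight_swap S w ((SimpleGraph.mem_edgeSet _).mpr hadjS) heS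
      (by rw [Sym2.mk_isDiag_iff]; exact habne)
  have hTleS : gweight T w
      ≤ gweight (S.deleteEdges {s(c, d)} ⊔ SimpleGraph.fromEdgeSet {s(a, b)}) w :=
    hTmin _ ⟨le2, tree2⟩
  linarith
end

section
/- Let G be a connected weighted graph with distinct edge weights, T its MST, e a non-bridge tree edge, and f the minimum-weight non-tree edge whose fundamental cycle contains e. Then w(T) - w(e) + w(f) equals the weight of a minimum spanning tree of G - e. -/
open SimpleGraph

section Aux

variable {V : Type*}

lemma reach_step {H : SimpleGraph V} {x y : V} {u v : V} (p : H.Walk u v) :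
    ((H.deleteEdges {s(x,y)}).Reachable x u ∨ (H.deleteEdges {s(x,y)}).Reachable y u) →
    ((H.deleteEdges {s(x,y)}).Reachable x v ∨ (H.deleteEdges {s(x,y)}).Reachable y v) := by
  induction p with
  | nil => exact id
  | @cons c d e hadj q ih =>
    intro h
    refine ih ?_
    by_cases hcd : s(c, d) = s(x, y)
    · rcases Sym2.eq_iff.mp hcd with ⟨rfl, rfl⟩ | ⟨rfl, rfl⟩
      · exact Or.inr (Reachable.refl _)
      · exact Or.inl (Reachable.refl _)
    · have hadj' : (H.deleteEdges {s(x,y)}).Adj c d := by simp [hadj, hcd]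
      exact h.imp (fun hr => hr.trans hadj'.reachable) (fun hr => hr.trans hadj'.reachable)

lemma split_at_edge {H : SimpleGraph V} {a b : V} {u v : V} (p : H.Walk u v) :
    p.IsTrail → s(a,b) ∈ p.edges →
    ((H.deleteEdges {s(a,b)}).Reachable u a ∧ (H.deleteEdges {s(a,b)}).Reachable b v) ∨
    ((H.deleteEdges {s(a,b)}).Reachable u b ∧ (H.deleteEdges {s(a,b)}).Reachable a v) := by
  induction p with
  | nil => intro _ h; simp at h
  | @cons c d e hadj q ih =>
    intro hp he
    rw [Walk.edges_cons, List.mem_cons] at he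
    rw [Walk.isTrail_cons] at hp
    by_cases hcd : s(c, d) = s(a, b)
    · have hq : s(a,b) ∉ q.edges := hcd ▸ hp.2
      have hqr : (H.deleteEdges {s(a,b)}).Reachable d e :=
        ⟨q.toDeleteEdges _ (fun e' he' h' => hq ((Set.mem_singleton_iff.mp h') ▸ he'))⟩
      rcases Sym2.eq_iff.mp hcd with ⟨rfl, rfl⟩ | ⟨rfl, rfl⟩
      · exact Or.inl ⟨Reachable.refl _, hqr⟩
      · exact Or.inr ⟨Reachable.refl _, hqr⟩
    · have he' : s(a,b) ∈ q.edges := he.resolve_left (fun h => hcd h.symm)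
      have hadj' : (H.deleteEdges {s(a,b)}).Adj c d := by
        simp only [deleteEdges_adj, Set.mem_singleton_iff]
        exact ⟨hadj, hcd⟩
      rcases ih hp.1 he' with ⟨h1, h2⟩ | ⟨h1, h2⟩
      · exact Or.inl ⟨hadj'.reachable.trans h1, h2⟩
      · exact Or.inr ⟨hadj'.reachable.trans h1, h2⟩

lemma exists_crossing_edge {H : SimpleGraph V} {P : V → Prop} {u v : V} (p : H.Walk u v) :
    P u → ¬P v → ∃ x y, s(x,y) ∈ p.edges ∧ P x ∧ ¬P y := by
  induction p with
  | nil => intro h h'; exact absurd h h'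
  | @cons c d e hadj q ih =>
    intro hc he
    by_cases hd : P d
    · obtain ⟨x, y, hm, hx, hy⟩ := ih hd he
      exact ⟨x, y, by simp [hm], hx, hy⟩
    · exact ⟨c, d, by simp, hc, hd⟩

lemma tree_swap {H : SimpleGraph V} {x y a b : V} (hH : H.IsTree)
    (hg : s(x,y) ∈ H.edgeSet) (hab : a ≠ b) (hne : s(a,b) ≠ s(x,y))
    (hnr : ¬(H.deleteEdges {s(x,y)}).Reachable a b) :
    (H.deleteEdges {s(x,y)} ⊔ fromEdgeSet {s(a,b)}).IsTree ∧ s(a,b) ∉ H.edgeSet := by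
  classical
  set D := H.deleteEdges {s(x,y)} with hD
  have hnab : s(a,b) ∉ H.edgeSet := by
    intro hmem
    refine hnr (Adj.reachable ?_)
    simp only [hD, deleteEdges_adj, Set.mem_singleton_iff]
    exact ⟨hmem, hne⟩
  have c1 : ∀ v, D.Reachable x v ∨ D.Reachable y v := by
    intro v
    exact (hH.isConnected.preconnected x v).elim
      (fun p => reach_step p (Or.inl (Reachable.refl _)))
  have key : ∀ v, D.Reachable a v ∨ D.Reachable b v := by
    rcases c1 a with ha | ha <;> rcases c1 b with hb | hb
    · exact absurd (ha.symm.trans hb) hnr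
    · intro v
      rcases c1 v with hv | hv
      · exact Or.inl (ha.symm.trans hv)
      · exact Or.inr (hb.symm.trans hv)
    · intro v
      rcases c1 v with hv | hv
      · exact Or.inr (hb.symm.trans hv)
      · exact Or.inl (ha.symm.trans hv)
    · exact absurd (ha.symm.trans hb) hnr
  set H' := D ⊔ fromEdgeSet {s(a,b)} with hH'
  have hadj_ab : H'.Adj a b := by
    rw [hH', sup_adj, fromEdgeSet_adj]
    exact Or.inr ⟨rfl, hab⟩
  have hconn : H'.Connected := by
    rw [connected_iff]
    refine ⟨fun u v => ?_, hH.isConnected.nonempty⟩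
    have hr : ∀ z, H'.Reachable a z := by
      intro z
      rcases key z with h | h
      · exact h.mono le_sup_left
      · exact hadj_ab.reachable.trans (h.mono le_sup_left)
    exact (hr u).symm.trans (hr v)
  have hedge : H'.edgeSet = D.edgeSet ∪ {s(a,b)} := by
    rw [hH', edgeSet_sup, edgeSet_fromEdgeSet]
    congr 1
    ext z
    simp only [Set.mem_diff, Set.mem_singleton_iff, Set.mem_setOf_eq, and_iff_left_iff_imp]
    rintro rfl
    simp [hab]
  have hacyc : H'.IsAcyclic := by
    intro u p hp
    by_cases hmem : s(a,b) ∈ p.edges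
    · have hs := split_at_edge p hp.isTrail hmem
      have hsub : H'.deleteEdges {s(a,b)} ≤ D := by
        rw [← edgeSet_subset_edgeSet, edgeSet_deleteEdges, hedge]
        rintro z ⟨hz1 | hz1, hz2⟩
        · exact hz1
        · exact absurd hz1 hz2
      rcases hs with ⟨h1, h2⟩ | ⟨h1, h2⟩
      · exact hnr (((h2.trans h1).symm).mono hsub)
      · exact hnr ((h2.trans h1).mono hsub)
    · have hsub : ∀ z ∈ p.edges, z ∈ H.edgeSet := by
        intro z hz
        have hz' := p.edges_subset_edgeSet hz
        rw [hedge] at hz'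
        rcases hz' with h | h
        · exact ((edgeSet_deleteEdges _ ▸ h : z ∈ H.edgeSet \ {s(x,y)})).1
        · exact absurd (Set.mem_singleton_iff.mp h ▸ hz) hmem
      exact hH.IsAcyclic (p.transfer H hsub) (hp.transfer hsub)
  exact ⟨⟨hconn, hacyc⟩, hnab⟩

lemma gweight_swap [Fintype V] [DecidableEq V] {H : SimpleGraph V} {g k : Sym2 V}
    (w : Sym2 V → ℝ) (hg : g ∈ H.edgeSet) (hk : k ∉ H.edgeSet) (hkd : ¬k.IsDiag) :
    gweight (H.deleteEdges {g} ⊔ fromEdgeSet {k}) w = gweight H w - w g + w k := by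
  classical
  unfold gweight
  have hfin : (H.deleteEdges {g} ⊔ fromEdgeSet {k}).edgeSet.toFinite.toFinset
      = insert k (H.edgeSet.toFinite.toFinset.erase g) := by
    ext z
    simp only [Set.Finite.mem_toFinset, edgeSet_sup, edgeSet_deleteEdges, edgeSet_fromEdgeSet,
      Set.mem_union, Set.mem_diff, Set.mem_singleton_iff, Set.mem_setOf_eq,
      Finset.mem_insert, Finset.mem_erase]
    constructor
    · rintro (⟨h1, h2⟩ | ⟨h1, _⟩)
      · exact Or.inr ⟨h2, h1⟩
      · exact Or.inl h1
    · rintro (rfl | ⟨h1, h2⟩)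
      · exact Or.inr ⟨rfl, hkd⟩
      · exact Or.inl ⟨h2, h1⟩
  rw [hfin, Finset.sum_insert (by simp [Set.Finite.mem_toFinset]; intro _; exact hk),
    ← Finset.add_sum_erase _ w
    (show g ∈ H.edgeSet.toFinite.toFinset by simpa [Set.Finite.mem_toFinset] using hg)]
  ring

end Aux

/-- for a non-bridge tree edge `e` with minimum-weight replacement
`f`, `w(T) - w(e) + w(f)` is the weight of a minimum spanning tree of `G - e`. -/
theorem stmt10 {V : Type*} [Fintype V] [DecidableEq V]
    (G T : SimpleGraph V) (w : Sym2 V → ℝ)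
    (hG : G.Connected) (hw : Set.InjOn w G.edgeSet) (hT : IsMST G T w)
    (e : Sym2 V) (he : e ∈ T.edgeSet) (hbr : ¬ G.IsBridge e)
    (f : Sym2 V) (hf : f ∈ G.edgeSet \ T.edgeSet)
    (hcyc : InFundCycle T f e)
    (hmin : ∀ f' ∈ G.edgeSet \ T.edgeSet, InFundCycle T f' e → w f ≤ w f') :
    ∀ T' : SimpleGraph V, IsMST (G.deleteEdges {e}) T' w →
      gweight T' w = gweight T w - w e + w f := by
  classical
  obtain ⟨a, b, rfl⟩ : ∃ a b, e = s(a, b) := Sym2.exists.mp ⟨e, rfl⟩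
  intro T' hT'
  obtain ⟨⟨hTle, hTtree⟩, hTmin⟩ := hT
  obtain ⟨⟨hT'le, hT'tree⟩, hT'min⟩ := hT'
  have hfG : f ∈ G.edgeSet := hf.1
  have hfT : f ∉ T.edgeSet := hf.2
  have hfe : f ≠ s(a, b) := fun h => hfT (h ▸ he)
  have hab : a ≠ b := (T.mem_edgeSet.mp he).ne
  -- e is a bridge of the tree T
  have hTbr : ¬(T.deleteEdges {s(a, b)}).Reachable a b := by
    have hbridge := isAcyclic_iff_forall_edge_isBridge.mp hTtree.IsAcyclic he
    rw [isBridge_iff] at hbridge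
    exact hbridge
  -- endpoints of f are separated by removing e from T
  rcases hcyc with hEf | ⟨c, d, p, hp, hfcd, hep⟩
  · exact absurd (hEf ▸ he) hfT
  subst hfcd
  have hcd : c ≠ d := by
    intro h
    exact G.not_isDiag_of_mem_edgeSet hfG (by simp [h])
  have hsep : ¬(T.deleteEdges {s(a, b)}).Reachable c d := by
    intro hrcd
    rcases split_at_edge p hp.isTrail hep with ⟨h1, h2⟩ | ⟨h1, h2⟩
    · exact hTbr ((h1.symm.trans hrcd).trans h2.symm)
    · exact hTbr ((h2.trans hrcd.symm).trans h1)
  -- the swapped tree T'' = T - e + f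
  obtain ⟨hT''tree, -⟩ := tree_swap hTtree he hcd hfe hsep
  set T'' := T.deleteEdges {s(a, b)} ⊔ fromEdgeSet {s(c, d)} with hT''
  have hT''le : T'' ≤ G.deleteEdges {s(a, b)} := by
    refine sup_le (deleteEdges_mono hTle) ?_
    intro u v hadj
    rw [fromEdgeSet_adj] at hadj
    rw [← mem_edgeSet, hadj.1, edgeSet_deleteEdges]
    exact ⟨hfG, fun h => hfe (Set.mem_singleton_iff.mp h)⟩
  have hT''w : gweight T'' w = gweight T w - w s(a, b) + w s(c, d) :=
    gweight_swap w he hfT (by simp [hcd])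
  -- upper bound
  have hub : gweight T' w ≤ gweight T w - w s(a, b) + w s(c, d) :=
    hT''w ▸ hT'min T'' ⟨hT''le, hT''tree⟩
  -- lower bound
  have hlb : gweight T w - w s(a, b) + w s(c, d) ≤ gweight T' w := by
    obtain ⟨q₀⟩ := hT'tree.isConnected.preconnected a b
    set q := q₀.toPath with hq
    obtain ⟨x, y, hxyq, hPx, hPy⟩ :=
      exists_crossing_edge (P := fun z => (T.deleteEdges {s(a, b)}).Reachable a z)
        (q : T'.Walk a b) (Reachable.refl _) hTbr
    have hgT' : s(x, y) ∈ T'.edgeSet := (q : T'.Walk a b).edges_subset_edgeSet hxyq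
    have hgGe : s(x, y) ∈ (G.deleteEdges {s(a, b)}).edgeSet := edgeSet_mono hT'le hgT'
    have hgG : s(x, y) ∈ G.edgeSet := (edgeSet_deleteEdges _ ▸ hgGe).1
    have hge : s(x, y) ≠ s(a, b) := fun h =>
      ((edgeSet_deleteEdges _ ▸ hgGe).2 (Set.mem_singleton_iff.mpr h))
    have hxy : x ≠ y := (T'.mem_edgeSet.mp hgT').ne
    have hgT : s(x, y) ∉ T.edgeSet := by
      intro hmem
      have hadj : (T.deleteEdges {s(a, b)}).Adj x y := by
        simp only [deleteEdges_adj, Set.mem_singleton_iff]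
        exact ⟨hmem, hge⟩
      exact hPy (hPx.trans hadj.reachable)
    -- s(x,y) has e on its fundamental cycle
    have hfund : InFundCycle T s(x, y) s(a, b) := by
      obtain ⟨r⟩ := hTtree.isConnected.preconnected x y
      refine Or.inr ⟨x, y, r.toPath, r.toPath.isPath, rfl, ?_⟩
      by_contra hnot
      have : (T.deleteEdges {s(a, b)}).Reachable x y :=
        ⟨(r.toPath : T.Walk x y).toDeleteEdges _
          (fun e' he' h' => hnot ((Set.mem_singleton_iff.mp h') ▸ he'))⟩
      exact hPy (hPx.trans this)
    have hwfg : w s(c, d) ≤ w s(x, y) := hmin _ ⟨hgG, hgT⟩ hfund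
    -- swap in T': S' = T' - g + e is a spanning tree of G
    have hT'gbr : ¬(T'.deleteEdges {s(x, y)}).Reachable x y := by
      have hbridge := isAcyclic_iff_forall_edge_isBridge.mp hT'tree.IsAcyclic hgT'
      rw [isBridge_iff] at hbridge
      exact hbridge
    have hnr' : ¬(T'.deleteEdges {s(x, y)}).Reachable a b := by
      intro hr
      rcases split_at_edge (q : T'.Walk a b) q.isTrail hxyq with ⟨h1, h2⟩ | ⟨h1, h2⟩
      · exact hT'gbr ((h1.symm.trans hr).trans h2.symm)
      · exact hT'gbr (h2.trans (hr.symm.trans h1))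
    obtain ⟨hS'tree, habT'⟩ := tree_swap hT'tree hgT' hab (Ne.symm hge) hnr'
    set S' := T'.deleteEdges {s(x, y)} ⊔ fromEdgeSet {s(a, b)} with hS'
    have heG : s(a, b) ∈ G.edgeSet := edgeSet_mono hTle he
    have hS'le : S' ≤ G := by
      refine sup_le ((deleteEdges_le _).trans (hT'le.trans (deleteEdges_le _))) ?_
      intro u v hadj
      rw [fromEdgeSet_adj] at hadj
      rw [← mem_edgeSet, hadj.1]
      exact heG
    have hS'w : gweight S' w = gweight T' w - w s(x, y) + w s(a, b) :=
      gweight_swap w hgT' habT' (by simp [hab])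
    have hTS' : gweight T w ≤ gweight T' w - w s(x, y) + w s(a, b) :=
      hS'w ▸ hTmin S' ⟨hS'le, hS'tree⟩
    linarith
  linarith
end

section
/- Let G be a connected weighted graph with distinct edge weights and no bridges, T its MST, and for each tree edge e let r(e) be its minimum-weight replacement edge. Then the most vital edge of G is the tree edge e maximizing w(r(e)) - w(e). -/
open SimpleGraph

section Aux

variable {V : Type*}

lemma conn_del {G : SimpleGraph V} (hG : G.Connected) {x y : V}
    (h : (G.deleteEdges {s(x,y)}).Reachable x y) : (G.deleteEdges {s(x,y)}).Connected := by
  rw [connected_iff]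
  refine ⟨fun a b => ?_, hG.nonempty⟩
  obtain ⟨p⟩ := hG a b
  induction p with
  | nil => rfl
  | @cons a m b h' q ih =>
    refine Reachable.trans ?_ ih
    by_cases hc : s(a, m) = s(x, y)
    · rw [Sym2.eq_iff] at hc
      rcases hc with ⟨rfl, rfl⟩ | ⟨rfl, rfl⟩
      · exact h
      · exact h.symm
    · exact Adj.reachable (by rw [deleteEdges_adj]; exact ⟨h', by simpa using hc⟩)

lemma exists_cross {H K : SimpleGraph V} {a : V} : ∀ {s t : V} (p : K.Walk s t),
    H.Reachable a s → ¬H.Reachable a t →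
    ∃ x y, s(x,y) ∈ p.edges ∧ H.Reachable a x ∧ ¬H.Reachable a y := by
  intro s t p
  induction p with
  | nil => intro hs ht; exact absurd hs ht
  | @cons s m t h q ih =>
    intro hs ht
    by_cases hm : H.Reachable a m
    · obtain ⟨x, y, he, hx, hy⟩ := ih hm ht
      exact ⟨x, y, List.mem_cons_of_mem _ he, hx, hy⟩
    · exact ⟨s, m, List.mem_cons_self, hs, hm⟩

lemma swap_isTree [DecidableEq V] {A : SimpleGraph V} (hA : A.IsTree) {u v : V} (huv : u ≠ v)
    (hd : s(u,v) ∉ A.edgeSet) {p : A.Walk u v} (hp : p.IsPath) {c : Sym2 V}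
    (hc : c ∈ p.edges) :
    (A.deleteEdges {c} ⊔ SimpleGraph.fromEdgeSet {s(u,v)}).IsTree := by
  have hcA : c ∈ A.edgeSet := p.edges_subset_edgeSet hc
  have hcd : c ≠ s(u,v) := fun h => hd (h ▸ hcA)
  set B := A ⊔ SimpleGraph.fromEdgeSet {s(u,v)} with hB
  have hAB : A ≤ B := le_sup_left
  have hBadj : B.Adj u v := by
    rw [hB, sup_adj, fromEdgeSet_adj]; exact Or.inr ⟨rfl, huv⟩
  have key : A.deleteEdges {c} ⊔ SimpleGraph.fromEdgeSet {s(u,v)} = B.deleteEdges {c} := by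
    ext x y
    simp only [sup_adj, deleteEdges_adj, fromEdgeSet_adj, hB, Set.mem_singleton_iff]
    constructor
    · rintro (⟨h1, h2⟩ | ⟨h1, h2⟩)
      · exact ⟨Or.inl h1, h2⟩
      · exact ⟨Or.inr ⟨h1, h2⟩, fun hh => hcd (by rw [← hh, h1])⟩
    · rintro ⟨h1 | h1, h2⟩
      · exact Or.inl ⟨h1, h2⟩
      · exact Or.inr h1
  -- connectivity
  have hpe : ∀ e ∈ p.edges, e ∈ B.edgeSet := fun e he =>
    edgeSet_mono hAB (p.edges_subset_edgeSet he)
  have hp' : ((p.transfer B hpe).reverse).IsPath := (hp.transfer hpe).reverse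
  have hnotmem : s(u,v) ∉ ((p.transfer B hpe).reverse).edges := by
    rw [Walk.edges_reverse, List.mem_reverse, Walk.edges_transfer]
    exact fun h => hd (p.edges_subset_edgeSet h)
  have hcyc : (Walk.cons hBadj ((p.transfer B hpe).reverse)).IsCycle :=
    (Walk.cons_isCycle_iff _ _).mpr ⟨hp', hnotmem⟩
  have hcmem : c ∈ (Walk.cons hBadj ((p.transfer B hpe).reverse)).edges := by
    rw [Walk.edges_cons, Walk.edges_reverse]
    exact List.mem_cons_of_mem _ (by rw [List.mem_reverse, Walk.edges_transfer]; exact hc)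
  have hconn : (B.deleteEdges {c}).Connected := by
    revert hcmem
    induction c using Sym2.ind with
    | _ x y =>
      intro hcmem
      have hreach : (B.deleteEdges {s(x,y)}).Reachable x y :=
        (SimpleGraph.adj_and_reachable_delete_edges_iff_exists_cycle.mpr
          ⟨u, _, hcyc, hcmem⟩).2
      exact conn_del (hA.isConnected.mono hAB) hreach
  -- acyclicity
  have hacy : (B.deleteEdges {c}).IsAcyclic := by
    intro z q hq
    by_cases hduv : s(u,v) ∈ q.edges
    · have hreach : ((B.deleteEdges {c}).deleteEdges {s(u,v)}).Reachable u v :=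
        (SimpleGraph.adj_and_reachable_delete_edges_iff_exists_cycle.mpr
          ⟨z, q, hq, hduv⟩).2
      have hle : (B.deleteEdges {c}).deleteEdges {s(u,v)} ≤ A.deleteEdges {c} := by
        intro x y hxy
        simp only [deleteEdges_adj, sup_adj, fromEdgeSet_adj, hB,
          Set.mem_singleton_iff] at hxy ⊢
        obtain ⟨⟨h1 | h1, h2⟩, h3⟩ := hxy
        · exact ⟨h1, h2⟩
        · exact absurd h1.1 h3
      obtain ⟨q2⟩ := hreach.mono hle
      have hq2c : ∀ e ∈ q2.edges, e ∈ A.edgeSet := by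
        intro e he
        have := q2.edges_subset_edgeSet he
        rw [edgeSet_deleteEdges] at this
        exact this.1
      have hcne : c ∉ (q2.transfer A hq2c).edges := by
        rw [Walk.edges_transfer]
        intro he
        have := q2.edges_subset_edgeSet he
        rw [edgeSet_deleteEdges] at this
        exact this.2 rfl
      have huniq := hA.IsAcyclic.path_unique ⟨p, hp⟩ ((q2.transfer A hq2c).toPath)
      have : c ∈ ((q2.transfer A hq2c).toPath : A.Walk u v).edges := by
        rw [← huniq]; exact hc
      exact hcne (Walk.edges_toPath_subset _ this)
    · have hqe : ∀ e ∈ q.edges, e ∈ A.edgeSet := by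
        intro e he
        have := q.edges_subset_edgeSet he
        rw [edgeSet_deleteEdges] at this
        obtain ⟨h1, _⟩ := this
        rw [hB, edgeSet_sup, edgeSet_fromEdgeSet] at h1
        rcases h1 with h1 | h1
        · exact h1
        · exact absurd h1.1 (fun hh => hduv (hh ▸ he))
      exact hA.IsAcyclic (q.transfer A hqe) (hq.transfer hqe)
  rw [key]
  exact ⟨hconn, hacy⟩

lemma swap_edgeSet [DecidableEq V] (A : SimpleGraph V) {u v : V} (huv : u ≠ v) (c : Sym2 V) :
    (A.deleteEdges {c} ⊔ SimpleGraph.fromEdgeSet {s(u,v)}).edgeSet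
      = (A.edgeSet \ {c}) ∪ {s(u,v)} := by
  rw [edgeSet_sup, edgeSet_deleteEdges, edgeSet_fromEdgeSet]
  congr 1
  ext z
  simp only [Set.mem_diff, Set.mem_singleton_iff, Set.mem_setOf_eq, and_iff_left_iff_imp]
  rintro rfl
  simp [huv]

lemma gweight_swap_s12 [Fintype V] [DecidableEq V] {X A : SimpleGraph V} {c d : Sym2 V}
    (hX : X.edgeSet = (A.edgeSet \ {c}) ∪ {d}) (hcA : c ∈ A.edgeSet) (hdA : d ∉ A.edgeSet)
    (w : Sym2 V → ℝ) : gweight X w = gweight A w - w c + w d := by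
  classical
  have hset : X.edgeSet.toFinite.toFinset
      = insert d ((A.edgeSet.toFinite.toFinset).erase c) := by
    ext z
    simp only [Set.Finite.mem_toFinset, hX, Finset.mem_insert, Finset.mem_erase,
      Set.mem_union, Set.mem_diff, Set.mem_singleton_iff]
    tauto
  rw [gweight, hset, Finset.sum_insert (by
      simp [Finset.mem_erase, Set.Finite.mem_toFinset]
      intro _; exact hdA),
    Finset.sum_erase_eq_sub (by simp [Set.Finite.mem_toFinset]; exact hcA)]
  rw [gweight]; ring

end Aux

/-- in a bridgeless connected graph with distinct weights, the most
vital edge is the tree edge `e` maximizing `w(r(e)) - w(e)`, where `r(e)` is the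
minimum-weight replacement edge of `e`. -/
theorem stmt12 {V : Type*} [Fintype V] [DecidableEq V]
    (G T : SimpleGraph V) (w : Sym2 V → ℝ)
    (hG : G.Connected) (hw : Set.InjOn w G.edgeSet)
    (hnb : ∀ e ∈ G.edgeSet, ¬ G.IsBridge e)
    (hT : IsMST G T w)
    (rep : Sym2 V → Sym2 V)
    (hrep : ∀ e ∈ T.edgeSet, rep e ∈ G.edgeSet \ T.edgeSet ∧
      InFundCycle T (rep e) e ∧
      ∀ f' ∈ G.edgeSet \ T.edgeSet, InFundCycle T f' e → w (rep e) ≤ w f')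
    (e' : Sym2 V) (he' : e' ∈ T.edgeSet)
    (hmax : ∀ e ∈ T.edgeSet, w (rep e) - w e ≤ w (rep e') - w e') :
    ∀ e ∈ G.edgeSet, ∀ T1 T2 : SimpleGraph V,
      IsMST (G.deleteEdges {e}) T1 w → IsMST (G.deleteEdges {e'}) T2 w →
      gweight T1 w ≤ gweight T2 w := by
  intro e he T1 T2 hT1 hT2
  classical
  obtain ⟨⟨hTle, hTtree⟩, hTmin⟩ := hT
  have hT2le : T2 ≤ G.deleteEdges {e'} := hT2.1.1
  have hT2tree := hT2.1.2
  have hT2leG : T2 ≤ G := hT2le.trans (deleteEdges_le _)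
  obtain ⟨a, b, hab⟩ : ∃ a b, e' = s(a, b) := Sym2.ind (fun x y => ⟨x, y, rfl⟩) e'
  have he'G : e' ∈ G.edgeSet := edgeSet_mono hTle he'
  have hne : a ≠ b := fun h =>
    (T.not_isDiag_of_mem_edgeSet he') (by rw [hab, Sym2.mk_isDiag_iff]; exact h)
  -- e' is a bridge of T
  have hbr : ¬ (T.deleteEdges {e'}).Reachable a b := by
    have hbridge := (isAcyclic_iff_forall_edge_isBridge.mp hTtree.IsAcyclic) he'
    rw [hab, isBridge_iff] at hbridge
    rw [hab]
    exact hbridge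
  have he'T2 : e' ∉ T2.edgeSet := by
    intro h
    have := edgeSet_mono hT2le h
    rw [edgeSet_deleteEdges] at this
    exact this.2 rfl
  -- find a crossing edge on a T2-path from a to b
  obtain ⟨pw⟩ := hT2tree.isConnected a b
  obtain ⟨x, y, hfe, hrx, hry⟩ := exists_cross (H := T.deleteEdges {e'})
    (pw.toPath : T2.Walk a b) (Reachable.refl a) hbr
  have hfT2 : s(x,y) ∈ T2.edgeSet := (pw.toPath : T2.Walk a b).edges_subset_edgeSet hfe
  have hfG : s(x,y) ∈ G.edgeSet := edgeSet_mono hT2leG hfT2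
  have hfT : s(x,y) ∉ T.edgeSet := by
    intro h
    have hfe' : s(x,y) ≠ e' := fun hh => he'T2 (hh ▸ hfT2)
    have hadj : (T.deleteEdges {e'}).Adj x y := by
      rw [deleteEdges_adj]
      exact ⟨T.mem_edgeSet.mp h, by simpa using hfe'⟩
    exact hry (hrx.trans hadj.reachable)
  -- s(x,y) lies on the fundamental cycle of e'... i.e. e' is on the T-path from x to y
  obtain ⟨qw⟩ := hTtree.isConnected x y
  have he'q : e' ∈ (qw.toPath : T.Walk x y).edges := by
    by_contra hno
    have hwalk := Walk.toDeleteEdges {e'} (qw.toPath : T.Walk x y)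
      (fun z hz => by simp only [Set.mem_singleton_iff]; rintro rfl; exact hno hz)
    exact hry (hrx.trans hwalk.reachable)
  have hIFC : InFundCycle T s(x,y) e' :=
    Or.inr ⟨x, y, (qw.toPath : T.Walk x y), qw.toPath.property, rfl, he'q⟩
  have hle_f : w (rep e') ≤ w s(x,y) := (hrep e' he').2.2 s(x,y) ⟨hfG, hfT⟩ hIFC
  -- swap in T2 : T2 - f + e' is a spanning tree of G
  have hsabT2 : s(a,b) ∉ T2.edgeSet := by rw [← hab]; exact he'T2
  have hT2'tree : (T2.deleteEdges {s(x,y)} ⊔ SimpleGraph.fromEdgeSet {s(a,b)}).IsTree :=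
    swap_isTree hT2tree hne hsabT2 pw.toPath.property hfe
  have hT2'le : T2.deleteEdges {s(x,y)} ⊔ SimpleGraph.fromEdgeSet {s(a,b)} ≤ G := by
    apply sup_le ((deleteEdges_le _).trans hT2leG)
    intro z z' hz
    rw [fromEdgeSet_adj] at hz
    rw [← mem_edgeSet]
    have hzz : s(z,z') = s(a,b) := hz.1
    rw [hzz, ← hab]
    exact he'G
  have hgw2 : gweight (T2.deleteEdges {s(x,y)} ⊔ SimpleGraph.fromEdgeSet {s(a,b)}) w
      = gweight T2 w - w s(x,y) + w s(a,b) :=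
    gweight_swap_s12 (swap_edgeSet T2 hne s(x,y)) hfT2 hsabT2 w
  have hmin2 := hTmin _ ⟨hT2'le, hT2'tree⟩
  rw [hgw2] at hmin2
  have hwe' : w e' = w s(a,b) := by rw [hab]
  have key2 : gweight T w + w (rep e') - w e' ≤ gweight T2 w := by linarith
  -- now the T1 side
  by_cases heT : e ∈ T.edgeSet
  · obtain ⟨⟨hrG, hrT⟩, hIFCe, _⟩ := hrep e heT
    rcases hIFCe with h | ⟨u, v, q, hq, hruv, heq⟩
    · exact absurd (show rep e ∈ T.edgeSet by rw [← h]; exact heT) hrT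
    · have huvne : u ≠ v := fun h =>
        (G.not_isDiag_of_mem_edgeSet hrG) (by rw [hruv, Sym2.mk_isDiag_iff]; exact h)
      have hsuvT : s(u,v) ∉ T.edgeSet := by rw [← hruv]; exact hrT
      have hT'tree : (T.deleteEdges {e} ⊔ SimpleGraph.fromEdgeSet {s(u,v)}).IsTree :=
        swap_isTree hTtree huvne hsuvT hq heq
      have hrne : rep e ≠ e := fun h => hrT (by rw [h]; exact heT)
      have hT'le : T.deleteEdges {e} ⊔ SimpleGraph.fromEdgeSet {s(u,v)} ≤ G.deleteEdges {e} := by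
        apply sup_le
        · intro z z' hz
          rw [deleteEdges_adj] at hz ⊢
          exact ⟨hTle hz.1, hz.2⟩
        · intro z z' hz
          rw [fromEdgeSet_adj] at hz
          have hzz : s(z,z') = s(u,v) := hz.1
          rw [deleteEdges_adj]
          constructor
          · rw [← mem_edgeSet, hzz, ← hruv]; exact hrG
          · simp only [Set.mem_singleton_iff]
            rw [hzz, ← hruv]
            exact hrne
      have hgw1 : gweight (T.deleteEdges {e} ⊔ SimpleGraph.fromEdgeSet {s(u,v)}) w
          = gweight T w - w e + w s(u,v) :=
        gweight_swap_s12 (swap_edgeSet T huvne e) heT hsuvT w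
      have hmin1 := hT1.2 _ ⟨hT'le, hT'tree⟩
      rw [hgw1] at hmin1
      have hmaxe := hmax e heT
      have hwru : w (rep e) = w s(u,v) := by rw [hruv]
      linarith
  · have hTle1 : T ≤ G.deleteEdges {e} := by
      intro z z' hz
      rw [deleteEdges_adj]
      refine ⟨hTle hz, ?_⟩
      simp only [Set.mem_singleton_iff]
      intro hh
      exact heT (hh ▸ (T.mem_edgeSet.mpr hz))
    have h1 := hT1.2 T ⟨hTle1, hTtree⟩
    have h2 := hTmin T2 ⟨hT2leG, hT2tree⟩
    linarith
end
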